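/- (Theorem 2, individual certification, for rNN) Let X be a metric space, c ≥ 2, r : ℝ, D a multiset over X × Fin c, and let (x_1,y_1),…,(x_t,y_t) be a testing dataset with x_i : X and y_i ∈ Fin c. For each i, let a_i := rNN_r(D,x_i), s_l^{(i)} := s_l(N_r(D,x_i)), let b_i be the largest label among those l ≠ a_i attaining the maximum of s_l^{(i)} over l ≠ a_i, and set e_i* := ⌈(s_{a_i}^{(i)} − s_{b_i}^{(i)} + 𝟙(b_i < a_i))/2⌉ − 1 ∈ ℤ. Then for every natural number e and every multiset D* over X × Fin c with S(D,D*) ≤ e, the number of indices i with rNN_r(D*,x_i) = y_i is at least the number of indices i with a_i = y_i and (e : ℤ) ≤ e_i*. -/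

import Mathlib

/-- Poisoning size between two multisets: `max (card A) (card B) - card (A ∩ B)`. -/
noncomputable def pSize {α : Type*} (A B : Multiset α) : ℕ :=
  haveI := Classical.decEq α
  max A.card B.card - (A ∩ B).card

/-- Number of votes for label `l` in a multiset of labeled examples (counted with
multiplicity). -/
def votes {X : Type*} {c : ℕ} (T : Multiset (X × Fin c)) (l : Fin c) : ℕ :=
  T.countP (fun p => p.2 = l)

/-- Tie-broken majority label: the largest label (in the order of `Fin c`) among the
labels attaining the maximum vote count. -/
noncomputable def majLabel {X : Type*} {c : ℕ} (hc : 0 < c) (T : Multiset (X × Fin c)) :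
    Fin c :=
  (Finset.univ.filter (fun l : Fin c => ∀ l', votes T l' ≤ votes T l)).max'
    (by
      haveI : NeZero c := ⟨hc.ne'⟩
      obtain ⟨b, -, hb⟩ := Finset.exists_max_image (Finset.univ : Finset (Fin c)) (votes T)
        Finset.univ_nonempty
      exact ⟨b, Finset.mem_filter.mpr ⟨Finset.mem_univ b, fun l' => hb l' (Finset.mem_univ l')⟩⟩)

/-- The largest label, among those `l ≠ a`, attaining the maximum of `s l` over `l ≠ a`. -/
noncomputable def secondLabel {c : ℕ} (hc : 2 ≤ c) (s : Fin c → ℕ) (a : Fin c) : Fin c :=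
  (Finset.univ.filter (fun l : Fin c => l ≠ a ∧ ∀ l', l' ≠ a → s l' ≤ s l)).max'
    (by
      have h1 : 1 < Fintype.card (Fin c) := by rw [Fintype.card_fin]; omega
      obtain ⟨l0, hl0⟩ := Fintype.exists_ne_of_one_lt_card h1 a
      have hne : (Finset.univ.filter (fun l : Fin c => l ≠ a)).Nonempty :=
        ⟨l0, Finset.mem_filter.mpr ⟨Finset.mem_univ _, hl0⟩⟩
      obtain ⟨b, hb, hbmax⟩ := Finset.exists_max_image _ s hne
      refine ⟨b, Finset.mem_filter.mpr ⟨Finset.mem_univ _, (Finset.mem_filter.mp hb).2, ?_⟩⟩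
      intro l' hl'
      exact hbmax l' (Finset.mem_filter.mpr ⟨Finset.mem_univ _, hl'⟩))

/-- rNN neighbor multiset: training examples within distance `r` of the test input `x`. -/
noncomputable def Nr {X : Type*} [MetricSpace X] {c : ℕ} (r : ℝ)
    (D : Multiset (X × Fin c)) (x : X) : Multiset (X × Fin c) :=
  haveI : DecidablePred (fun p : X × Fin c => dist p.1 x ≤ r) := Classical.decPred _
  D.filter (fun p => dist p.1 x ≤ r)

/-- rNN prediction: tie-broken majority label among the rNN neighbors. -/
noncomputable def rNNpred {X : Type*} [MetricSpace X] {c : ℕ} (hc : 0 < c) (r : ℝ)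
    (D : Multiset (X × Fin c)) (x : X) : Fin c :=
  majLabel hc (Nr r D x)


/-!
Outside the common part `D ∩ D*` the two datasets have at most `S(D, D*) ≤ e` elements each,
so every vote count `s_l` on the poisoned data is within `e` of its clean value. Hence if the
lead of `a_i` over the runner-up `b_i` exceeds `2e`, or equals `2e` while ties between them
are broken in favour of `a_i` (that is, `b_i < a_i`), then `a_i` still wins the vote on `D*`.
-/

open Multiset

lemma pSize_comm {α : Type*} (A B : Multiset α) : pSize A B = pSize B A := by
  simp only [pSize, max_comm, Multiset.inter_comm]

lemma countP_le_countP_add_pSize {α : Type*} (p : α → Prop) [DecidablePred p]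
    (A B : Multiset α) : A.countP p ≤ B.countP p + pSize A B := by
  classical
  have hsplit : A.countP p = (A - A ∩ B).countP p + (A ∩ B).countP p := by
    rw [← countP_add, tsub_add_cancel_of_le inter_le_left]
  have hrest : (A - A ∩ B).countP p ≤ card A - card (A ∩ B) :=
    (countP_le_card _ _).trans (card_sub inter_le_left).le
  have hcommon : (A ∩ B).countP p ≤ B.countP p := countP_le_of_le p inter_le_right
  have hsize : card A - card (A ∩ B) ≤ pSize A B :=
    Nat.sub_le_sub_right (le_max_left _ _) _
  omega

lemma votes_Nr_le_add_pSize {X : Type*} [MetricSpace X] {c : ℕ} (r : ℝ)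
    (A B : Multiset (X × Fin c)) (x : X) (l : Fin c) :
    votes (Nr r A x) l ≤ votes (Nr r B x) l + pSize A B := by
  simp only [votes, Nr, countP_filter]
  exact countP_le_countP_add_pSize _ A B

lemma majLabel_eq_of_forall_votes {X : Type*} {c : ℕ} (hc : 0 < c) (T : Multiset (X × Fin c))
    (a : Fin c) (hmax : ∀ l, votes T l ≤ votes T a)
    (hstrict : ∀ l, a < l → votes T l < votes T a) :
    majLabel hc T = a := by
  refine le_antisymm (Finset.max'_le _ _ _ fun l hl => ?_)
    (Finset.le_max' _ a (Finset.mem_filter.mpr ⟨Finset.mem_univ _, hmax⟩))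
  by_contra! hal
  exact (hstrict l hal).not_ge ((Finset.mem_filter.mp hl).2 a)

section secondLabel

variable {c : ℕ} (hc : 2 ≤ c) (s : Fin c → ℕ) {a : Fin c}

lemma apply_le_apply_secondLabel {l : Fin c} (hla : l ≠ a) :
    s l ≤ s (secondLabel hc s a) :=
  (Finset.mem_filter.mp (Finset.max'_mem
    (Finset.univ.filter fun l : Fin c => l ≠ a ∧ ∀ l', l' ≠ a → s l' ≤ s l) _)).2.2 l hla

lemma apply_lt_apply_secondLabel {l : Fin c} (hba : secondLabel hc s a < a) (hal : a < l) :
    s l < s (secondLabel hc s a) := by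
  refine (apply_le_apply_secondLabel hc s hal.ne').lt_of_ne fun hl => ?_
  have hmem : l ∈ Finset.univ.filter (fun l : Fin c => l ≠ a ∧ ∀ l', l' ≠ a → s l' ≤ s l) :=
    Finset.mem_filter.mpr ⟨Finset.mem_univ _, hal.ne',
      fun l' hl' => hl ▸ apply_le_apply_secondLabel hc s hl'⟩
  exact (Finset.le_max' _ l hmem).not_gt (hba.trans hal)

end secondLabel

lemma majLabel_eq_of_two_mul_lt_margin {X : Type*} {c : ℕ} (hc0 : 0 < c) (hc : 2 ≤ c)
    {T T' : Multiset (X × Fin c)} {e : ℕ} (hup : ∀ l, votes T' l ≤ votes T l + e)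
    (hdown : ∀ l, votes T l ≤ votes T' l + e) (a : Fin c)
    (hmargin : 2 * (e : ℤ) < (votes T a : ℤ) - (votes T (secondLabel hc (votes T) a) : ℤ) +
      if secondLabel hc (votes T) a < a then 1 else 0) :
    majLabel hc0 T' = a := by
  have hdown_a := hdown a
  refine majLabel_eq_of_forall_votes hc0 T' a (fun l => ?_) (fun l hal => ?_)
  · rcases eq_or_ne l a with rfl | hla
    · exact le_rfl
    have hlb := apply_le_apply_secondLabel hc (votes T) hla
    have hup_l := hup l
    split_ifs at hmargin <;> omega
  · have hup_l := hup l
    by_cases hba : secondLabel hc (votes T) a < a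
    · have hlb := apply_lt_apply_secondLabel hc (votes T) hba hal
      rw [if_pos hba] at hmargin
      omega
    · have hlb := apply_le_apply_secondLabel hc (votes T) hal.ne'
      rw [if_neg hba] at hmargin
      omega

lemma le_ceil_div_two_sub_one_iff (e m : ℤ) : e ≤ ⌈(m : ℚ) / 2⌉ - 1 ↔ 2 * e < m := by
  rw [le_sub_iff_add_le, Int.add_one_le_iff, Int.lt_ceil, lt_div_iff₀ two_pos]
  norm_cast
  rw [mul_comm]

/-- Theorem 2, individual certification, for rNN: for any poisoned dataset
with poisoning size at most `e`, the number of correctly classified testing examples is at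
least the number of indices `i` with `a_i = y_i` and `e ≤ e_i*`. -/
theorem rnn_individual_certification {X : Type*} [MetricSpace X] {c : ℕ} (hc : 2 ≤ c)
    (r : ℝ) (D : Multiset (X × Fin c)) {t : ℕ} (xs : Fin t → X) (ys : Fin t → Fin c)
    (a b : Fin t → Fin c) (estar : Fin t → ℤ)
    (hb : ∀ i, b i = secondLabel hc (fun l => votes (Nr r D (xs i)) l) (a i))
    (he : ∀ i, estar i =
      ⌈(((votes (Nr r D (xs i)) (a i) : ℤ) - (votes (Nr r D (xs i)) (b i) : ℤ) +
          if b i < a i then 1 else 0 : ℤ) : ℚ) / 2⌉ - 1)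
    (e : ℕ) (Dstar : Multiset (X × Fin c)) (hD : pSize D Dstar ≤ e) :
    (Finset.univ.filter (fun i => a i = ys i ∧ (e : ℤ) ≤ estar i)).card ≤
      (Finset.univ.filter (fun i => rNNpred (by omega : 0 < c) r Dstar (xs i) = ys i)).card := by
  refine Finset.card_le_card fun i hi => ?_
  obtain ⟨hay, hee⟩ := (Finset.mem_filter.mp hi).2
  have hmargin := (le_ceil_div_two_sub_one_iff _ _).1 (he i ▸ hee)
  rw [hb i] at hmargin
  refine Finset.mem_filter.mpr ⟨Finset.mem_univ _, hay ▸ ?_⟩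
  exact majLabel_eq_of_two_mul_lt_margin _ hc
    (fun l => (votes_Nr_le_add_pSize r Dstar D (xs i) l).trans
      (by rw [pSize_comm]; omega))
    (fun l => (votes_Nr_le_add_pSize r D Dstar (xs i) l).trans (by omega)) (a i) hmargin
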